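/- For every R > 0: j_0(R) < 0; j_1(R) = 0; and for every integer k ≥ 2, 0 < j_k(R) < 1. Here j_k(R) := 1 − 3·I_{3/2}(R)/(R·I_{1/2}(R)) − I_{3/2}(R)·I_{k+3/2}(R)/(I_{1/2}(R)·I_{k+1/2}(R)). -/

import Mathlib

/-- The modified Bessel function of the first kind of order `m`:
`I_m(r) = ∑ (r/2)^(m+2n) / (n! Γ(m+n+1))`. -/
noncomputable def besselI (m r : ℝ) : ℝ :=
  ∑' n : ℕ, (r / 2) ^ (m + 2 * (n : ℝ)) / ((n.factorial : ℝ) * Real.Gamma (m + (n : ℝ) + 1))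

/-- `h_k(R) = ((k²+k)/2 - 1)·I_{k+3/2}(R)/(R·I_{k+1/2}(R))`. -/
noncomputable def hfun (k : ℕ) (R : ℝ) : ℝ :=
  (((k : ℝ) ^ 2 + k) / 2 - 1) * (besselI ((k : ℝ) + 3 / 2) R / (R * besselI ((k : ℝ) + 1 / 2) R))

/-- `j_k(R) = 1 - 3 I_{3/2}(R)/(R I_{1/2}(R)) - I_{3/2}(R) I_{k+3/2}(R)/(I_{1/2}(R) I_{k+1/2}(R))`. -/
noncomputable def jfun (k : ℕ) (R : ℝ) : ℝ :=
  1 - 3 * besselI (3 / 2) R / (R * besselI (1 / 2) R)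
    - besselI (3 / 2) R * besselI ((k : ℝ) + 3 / 2) R
      / (besselI (1 / 2) R * besselI ((k : ℝ) + 1 / 2) R)

/-!
Write `Y_m(r) = r I_{m+1}(r) / I_m(r)`. After the recurrence `I_{1/2} = I_{5/2} + (3/R) I_{3/2}`,
`j_k(R) = Y_{1/2} (Y_{3/2} - Y_{k+1/2}) / R²`, so everything follows from `Y_m` being strictly
decreasing in `m`. The three-term recurrence for `I_m` becomes the continued-fraction relation
`Y_m (2(m+1) + Y_{m+1}) = r²`, which transports `0 < Y_m - Y_{m+1} < 2` from `m + 1` down to `m`;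
for `2(m+1) ≥ r²` this holds because then `Y_m, Y_{m+1} ≤ 1`.
-/

open Real

noncomputable def besselITerm (m r : ℝ) (n : ℕ) : ℝ :=
  (r / 2) ^ (m + 2 * (n : ℝ)) / ((n.factorial : ℝ) * Gamma (m + (n : ℝ) + 1))

lemma besselI_eq_tsum (m r : ℝ) : besselI m r = ∑' n, besselITerm m r n := rfl

lemma pow_mul_Gamma_le_Gamma_add_nat {m : ℝ} (hm : -1 < m) (n : ℕ) :
    (m + 1) ^ n * Gamma (m + 1) ≤ Gamma (m + n + 1) := by
  induction n with
  | zero => simp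
  | succ n ih =>
    have hmn : 0 < m + n + 1 := by linarith [n.cast_nonneg (α := ℝ)]
    rw [Nat.cast_succ, show m + (n + 1) + 1 = (m + n + 1) + 1 by ring,
      Gamma_add_one (s := m + n + 1) hmn.ne', pow_succ]
    have hm1 : 0 < m + 1 := by linarith
    have := Gamma_pos_of_pos hm1
    calc (m + 1) ^ n * (m + 1) * Gamma (m + 1) = (m + 1) * ((m + 1) ^ n * Gamma (m + 1)) := by ring
      _ ≤ (m + n + 1) * Gamma (m + n + 1) :=
        mul_le_mul (by linarith [n.cast_nonneg (α := ℝ)]) ih (by positivity) hmn.le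

lemma besselITerm_pos {m r : ℝ} (hm : -1 < m) (hr : 0 < r) (n : ℕ) : 0 < besselITerm m r n := by
  have := Gamma_pos_of_pos (show 0 < m + n + 1 by linarith [n.cast_nonneg (α := ℝ)])
  unfold besselITerm
  positivity

lemma summable_besselITerm {m r : ℝ} (hm : -1 < m) (hr : 0 < r) :
    Summable (besselITerm m r) := by
  set x := r / 2
  have hx : 0 < x := by positivity
  have hm1 : 0 < m + 1 := by linarith
  refine .of_nonneg_of_le (fun n => (besselITerm_pos hm hr n).le) (fun n => ?_)
    ((summable_pow_div_factorial (x ^ 2 / (m + 1))).mul_left (x ^ m / Gamma (m + 1)))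
  have hpow : x ^ (m + 2 * (n : ℝ)) = x ^ m * (x ^ 2) ^ n := by
    rw [rpow_add hx, show 2 * (n : ℝ) = ((2 * n : ℕ) : ℝ) by push_cast; ring, rpow_natCast,
      pow_mul]
  have hΓ := pow_mul_Gamma_le_Gamma_add_nat hm n
  have := Gamma_pos_of_pos hm1
  have hrhs : x ^ m / Gamma (m + 1) * ((x ^ 2 / (m + 1)) ^ n / n.factorial)
      = x ^ m * (x ^ 2) ^ n / (n.factorial * ((m + 1) ^ n * Gamma (m + 1))) := by
    rw [div_pow]
    field_simp
  rw [besselITerm, hpow, hrhs]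
  gcongr

lemma half_mul_besselITerm_zero {m r : ℝ} (hm : -1 < m) (hr : 0 < r) :
    r / 2 * besselITerm m r 0 = (m + 1) * besselITerm (m + 1) r 0 := by
  have hm1 : 0 < m + 1 := by linarith
  have := Gamma_pos_of_pos hm1
  simp only [besselITerm, Nat.cast_zero, mul_zero, add_zero, Nat.factorial_zero, Nat.cast_one,
    one_mul]
  rw [Gamma_add_one hm1.ne', rpow_add_one (by positivity)]
  field_simp

lemma half_mul_besselITerm_succ {m r : ℝ} (hm : -1 < m) (hr : 0 < r) (n : ℕ) :
    r / 2 * besselITerm m r (n + 1) =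
      r / 2 * besselITerm (m + 2) r n + (m + 1) * besselITerm (m + 1) r (n + 1) := by
  have hmn : 0 < m + n + 2 := by linarith [n.cast_nonneg (α := ℝ)]
  have := Gamma_pos_of_pos hmn
  simp only [besselITerm, Nat.factorial_succ]
  push_cast
  rw [show m + 2 * (n + 1) = m + 2 * n + 2 by ring, show m + 2 + 2 * n = m + 2 * n + 2 by ring,
    show m + 1 + 2 * (n + 1) = m + 2 * n + 2 + 1 by ring, rpow_add_one (by positivity),
    show m + (n + 1) + 1 = m + n + 2 by ring, show m + 2 + n + 1 = m + n + 2 + 1 by ring,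
    show m + 1 + (n + 1) + 1 = m + n + 2 + 1 by ring, Gamma_add_one hmn.ne']
  field_simp
  ring

lemma besselI_pos {m r : ℝ} (hm : -1 < m) (hr : 0 < r) : 0 < besselI m r :=
  (summable_besselITerm hm hr).tsum_pos (fun n => (besselITerm_pos hm hr n).le) 0
    (besselITerm_pos hm hr 0)

lemma besselI_recurrence {m r : ℝ} (hm : -1 < m) (hr : 0 < r) :
    r * besselI m r = r * besselI (m + 2) r + 2 * (m + 1) * besselI (m + 1) r := by
  have hm1 : -1 < m + 1 := by linarith
  have hm2 : -1 < m + 2 := by linarith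
  have hs := summable_besselITerm hm hr
  have hs1 := summable_besselITerm hm1 hr
  have hs2 := summable_besselITerm hm2 hr
  have hs1' := (summable_nat_add_iff 1).mpr hs1
  have key : r / 2 * besselI m r = r / 2 * besselI (m + 2) r + (m + 1) * besselI (m + 1) r :=
    calc r / 2 * besselI m r
        = r / 2 * besselITerm m r 0 + ∑' n, r / 2 * besselITerm m r (n + 1) := by
          rw [besselI_eq_tsum, hs.tsum_eq_zero_add, mul_add, tsum_mul_left]
      _ = (m + 1) * besselITerm (m + 1) r 0 + ∑' n, (r / 2 * besselITerm (m + 2) r n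
            + (m + 1) * besselITerm (m + 1) r (n + 1)) := by
          simp only [half_mul_besselITerm_zero hm hr, half_mul_besselITerm_succ hm hr]
      _ = r / 2 * besselI (m + 2) r + (m + 1) * besselI (m + 1) r := by
          rw [(hs2.mul_left _).tsum_add (hs1'.mul_left _), tsum_mul_left, tsum_mul_left,
            besselI_eq_tsum, besselI_eq_tsum (m + 1), hs1.tsum_eq_zero_add]
          ring
  linarith

noncomputable def besselIRatio (m r : ℝ) : ℝ := r * besselI (m + 1) r / besselI m r

lemma besselIRatio_pos {m r : ℝ} (hm : -1 < m) (hr : 0 < r) : 0 < besselIRatio m r := by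
  have := besselI_pos hm hr
  have := besselI_pos (show -1 < m + 1 by linarith) hr
  unfold besselIRatio
  positivity

lemma besselIRatio_mul_add {m r : ℝ} (hm : -1 < m) (hr : 0 < r) :
    besselIRatio m r * (2 * (m + 1) + besselIRatio (m + 1) r) = r ^ 2 := by
  have := besselI_pos hm hr
  have := besselI_pos (show -1 < m + 1 by linarith) hr
  unfold besselIRatio
  rw [show m + 1 + 1 = m + 2 by ring]
  field_simp
  linear_combination -besselI_recurrence hm hr

lemma besselIRatio_mul_lt {m r : ℝ} (hm : -1 < m) (hr : 0 < r) :
    besselIRatio m r * besselIRatio (m + 1) r < r ^ 2 := by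
  nlinarith [besselIRatio_mul_add hm hr, besselIRatio_pos hm hr]

lemma besselIRatio_succ_lt_of_lt_add_two {m r : ℝ} (hm : -1 < m) (hr : 0 < r)
    (h : besselIRatio (m + 1) r < besselIRatio (m + 2) r + 2) :
    besselIRatio (m + 1) r < besselIRatio m r := by
  have h0 := besselIRatio_mul_add hm hr
  have h1 := besselIRatio_mul_add (show -1 < m + 1 by linarith) hr
  rw [show m + 1 + 1 = m + 2 by ring] at h1
  nlinarith [besselIRatio_pos (show -1 < m + 1 by linarith) hr]

lemma besselIRatio_lt_add_two_of_succ_lt {m r : ℝ} (hm : -1 < m) (hr : 0 < r)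
    (h : besselIRatio (m + 2) r < besselIRatio (m + 1) r) :
    besselIRatio m r < besselIRatio (m + 1) r + 2 := by
  -- `(Y_m - Y_{m+1}) (2(m+1) + Y_{m+1}) = Y_{m+1} (2 - (Y_{m+1} - Y_{m+2}))`
  have h0 := besselIRatio_mul_add hm hr
  have h1 := besselIRatio_mul_add (show -1 < m + 1 by linarith) hr
  rw [show m + 1 + 1 = m + 2 by ring] at h1
  nlinarith [besselIRatio_pos (show -1 < m + 1 by linarith) hr]

lemma besselIRatio_succ_lt_and_lt_add_two {r : ℝ} (hr : 0 < r) (n : ℕ) :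
    ∀ m : ℝ, -1 < m → r ^ 2 ≤ 2 * (m + n + 1) →
      besselIRatio (m + 1) r < besselIRatio m r ∧
        besselIRatio m r < besselIRatio (m + 1) r + 2 := by
  induction n with
  | zero =>
    intro m hm hmr
    rw [Nat.cast_zero, add_zero] at hmr
    have h0 := besselIRatio_mul_add hm hr
    have h1 := besselIRatio_mul_add (show -1 < m + 1 by linarith) hr
    have := besselIRatio_pos (show -1 < m + 1 by linarith) hr
    have := besselIRatio_pos (show -1 < m + 1 + 1 by linarith) hr
    have hY0 : besselIRatio m r ≤ 1 := by nlinarith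
    have hY1 : besselIRatio (m + 1) r < 1 := by nlinarith
    refine ⟨besselIRatio_succ_lt_of_lt_add_two hm hr ?_, by linarith⟩
    rw [show m + 2 = m + 1 + 1 by ring]
    linarith
  | succ n ih =>
    intro m hm hmr
    obtain ⟨hlt, hlt2⟩ := ih (m + 1) (by linarith) (by push_cast at hmr ⊢; linarith)
    rw [show m + 1 + 1 = m + 2 by ring] at hlt hlt2
    exact ⟨besselIRatio_succ_lt_of_lt_add_two hm hr hlt2,
      besselIRatio_lt_add_two_of_succ_lt hm hr hlt⟩

lemma besselIRatio_succ_lt {m r : ℝ} (hm : -1 < m) (hr : 0 < r) :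
    besselIRatio (m + 1) r < besselIRatio m r := by
  obtain ⟨n, hn⟩ := exists_nat_ge (r ^ 2 / 2)
  exact (besselIRatio_succ_lt_and_lt_add_two hr n m hm (by linarith)).1

lemma besselIRatio_strictAnti {m r : ℝ} (hm : -1 < m) (hr : 0 < r) :
    StrictAnti fun k : ℕ => besselIRatio (m + k) r :=
  strictAnti_nat_of_succ_lt fun k => by
    simpa only [Nat.cast_succ, add_assoc] using
      besselIRatio_succ_lt (show -1 < m + k by linarith [k.cast_nonneg (α := ℝ)]) hr

lemma jfun_eq_besselIRatio (k : ℕ) {R : ℝ} (hR : 0 < R) :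
    jfun k R = besselIRatio (1 / 2) R * (besselIRatio (3 / 2) R - besselIRatio (k + 1 / 2) R)
      / R ^ 2 := by
  have ha := besselI_pos (show (-1 : ℝ) < 1 / 2 by norm_num) hR
  have hb := besselI_pos (show (-1 : ℝ) < 3 / 2 by norm_num) hR
  have hu := besselI_pos (show (-1 : ℝ) < k + 1 / 2 by linarith [k.cast_nonneg (α := ℝ)]) hR
  have hrec := besselI_recurrence (show (-1 : ℝ) < 1 / 2 by norm_num) hR
  norm_num at hrec
  unfold jfun besselIRatio
  rw [show (k : ℝ) + 1 / 2 + 1 = k + 3 / 2 by ring]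
  norm_num
  field_simp
  linear_combination hrec

/-- `j_0(R) < 0`, `j_1(R) = 0`, and `0 < j_k(R) < 1` for every `k ≥ 2`. -/
theorem stmt6 (R : ℝ) (hR : 0 < R) :
    jfun 0 R < 0 ∧ jfun 1 R = 0 ∧
    ∀ k : ℕ, 2 ≤ k → 0 < jfun k R ∧ jfun k R < 1 := by
  have hm : (-1 : ℝ) < 1 / 2 := by norm_num
  have hpos := besselIRatio_pos hm hR
  have hsucc := besselIRatio_succ_lt hm hR
  have hprod := besselIRatio_mul_lt hm hR
  have hanti : ∀ k : ℕ, 2 ≤ k → besselIRatio (k + 1 / 2) R < besselIRatio (3 / 2) R := by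
    intro k hk
    have := besselIRatio_strictAnti hm hR (show 1 < k by omega)
    norm_num [add_comm] at this
    exact this
  norm_num at hsucc hprod
  refine ⟨?_, ?_, fun k hk => ⟨?_, ?_⟩⟩ <;> rw [jfun_eq_besselIRatio _ hR]
  · norm_num
    exact div_neg_of_neg_of_pos (mul_neg_of_pos_of_neg hpos (by linarith)) (by positivity)
  · norm_num
  · exact div_pos (mul_pos hpos (by linarith [hanti k hk])) (by positivity)
  · have hk_pos :=
      besselIRatio_pos (show (-1 : ℝ) < k + 1 / 2 by linarith [k.cast_nonneg (α := ℝ)]) hR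
    rw [div_lt_one (by positivity)]
    nlinarith [hanti k hk]
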